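/- arXiv:2111.11883 — 3 statements merged into one kernel-verified Lean document; each statement's English description precedes it below -/
import Mathlib

section
/- Suppose f(z₀, w₀) = 0, ∂f/∂z(z₀, w₀) = 0, and ∂f/∂w(z₀, w₀) = 0, and suppose w : U → ℂ is a function continuous at z₀ with w(z₀) = w₀, holomorphic on U ∖ {z₀}, satisfying f(z, w(z)) = 0, and differentiable at z₀. Then lim_{z→z₀} (-∂f/∂z(z, w(z)) / ∂f/∂w(z, w(z))) = w'(z₀), provided ∂f/∂w(z, w(z)) ≠ 0 for z ≠ z₀ near z₀. -/
noncomputable def eval2 (F : Polynomial (Polynomial ℂ)) (z w : ℂ) : ℂ :=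
  (F.map (Polynomial.evalRingHom z)).eval w

/-!
Off `z₀`, differentiating `f(z, w(z)) = 0` along the branch gives `f_z + f_w · w' = 0`, so the
quotient `-f_z / f_w` equals `w'(z)` wherever `f_w ≠ 0`. A function continuous at `z₀` and
holomorphic on a punctured neighbourhood has a removable singularity there, so `w` is analytic at
`z₀` and `w'` is continuous at `z₀`; hence the quotient tends to `w'(z₀)`.
-/

open Filter Topology Polynomial

lemma eval2_eq_sum (F : ℂ[X][X]) (z v : ℂ) :
    eval2 F z v = ∑ i ∈ F.support, (F.coeff i).eval z * v ^ i := by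
  rw [eval2, eval_map, eval₂_eq_sum, Polynomial.sum_def]
  simp

lemma differentiable_eval2 (F : ℂ[X][X]) :
    Differentiable ℂ fun p : ℂ × ℂ => eval2 F p.1 p.2 := by
  simp only [eval2_eq_sum]
  fun_prop

section Implicit

variable {𝕜 : Type*} [NontriviallyNormedField 𝕜] {g : 𝕜 × 𝕜 → 𝕜} {w : 𝕜 → 𝕜} {z : 𝕜}

theorem deriv_fst_add_deriv_snd_mul_deriv_eq_zero (hg : DifferentiableAt 𝕜 g (z, w z))
    (hw : DifferentiableAt 𝕜 w z) (hzero : ∀ᶠ z' in 𝓝 z, g (z', w z') = 0) :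
    deriv (fun z' => g (z', w z)) z + deriv (fun v => g (z, v)) (w z) * deriv w z = 0 := by
  set L := fderiv 𝕜 g (z, w z)
  have hL := hg.hasFDerivAt
  have hfst : HasDerivAt (fun z' => g (z', w z)) (L (1, 0)) z :=
    hL.comp_hasDerivAt z ((hasDerivAt_id z).prodMk (hasDerivAt_const z (w z)))
  have hsnd : HasDerivAt (fun v => g (z, v)) (L (0, 1)) (w z) :=
    hL.comp_hasDerivAt (w z) ((hasDerivAt_const (w z) z).prodMk (hasDerivAt_id (w z)))
  have hcurve : HasDerivAt (fun z' => g (z', w z')) (L (1, deriv w z)) z :=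
    hL.comp_hasDerivAt z ((hasDerivAt_id z).prodMk hw.hasDerivAt)
  have hL_split : L (1, deriv w z) = L (1, 0) + L (0, 1) * deriv w z := by
    rw [mul_comm, ← smul_eq_mul, ← map_smul, ← map_add]
    simp
  have hcurve_zero : (fun z' => g (z', w z')) =ᶠ[𝓝 z] fun _ => 0 := hzero
  rw [hfst.deriv, hsnd.deriv, ← hL_split, ← hcurve.deriv, hcurve_zero.deriv_eq, deriv_const]

theorem neg_deriv_fst_div_deriv_snd_eq_deriv (hg : DifferentiableAt 𝕜 g (z, w z))
    (hw : DifferentiableAt 𝕜 w z) (hzero : ∀ᶠ z' in 𝓝 z, g (z', w z') = 0)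
    (hsnd : deriv (fun v => g (z, v)) (w z) ≠ 0) :
    -deriv (fun z' => g (z', w z)) z / deriv (fun v => g (z, v)) (w z) = deriv w z := by
  rw [div_eq_iff hsnd]
  linear_combination -deriv_fst_add_deriv_snd_mul_deriv_eq_zero hg hw hzero

end Implicit

theorem removable_singularity_derivative_general
    (F : Polynomial (Polynomial ℂ)) (z₀ : ℂ)
    (U : Set ℂ) (hU : IsOpen U) (hz₀U : z₀ ∈ U)
    (w : ℂ → ℂ) (hcont : ContinuousAt w z₀)
    (hholo : DifferentiableOn ℂ w (U \ {z₀}))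
    (hsol : ∀ z ∈ U, eval2 F z (w z) = 0)
    (hnz : ∀ᶠ z in nhdsWithin z₀ {z₀}ᶜ, deriv (fun v => eval2 F z v) (w z) ≠ 0) :
    Filter.Tendsto
      (fun z => -(deriv (fun z' => eval2 F z' (w z)) z) /
        (deriv (fun v => eval2 F z v) (w z)))
      (nhdsWithin z₀ {z₀}ᶜ) (nhds (deriv w z₀)) := by
  have hpunctured : ∀ᶠ z in 𝓝[≠] z₀, U \ {z₀} ∈ 𝓝 z :=
    mem_of_superset (sdiff_mem_nhdsWithin_compl (hU.mem_nhds hz₀U) {z₀}) fun _ hz =>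
      (hU.sdiff isClosed_singleton).mem_nhds hz
  have hderiv : ContinuousAt (deriv w) z₀ :=
    (Complex.analyticAt_of_differentiable_on_punctured_nhds_of_continuousAt
      (hpunctured.mono fun z hz => hholo.differentiableAt hz) hcont).deriv.continuousAt
  refine (hderiv.tendsto.mono_left nhdsWithin_le_nhds).congr' ?_
  filter_upwards [hpunctured, hnz] with z hz hne
  have hsol_near : ∀ᶠ z' in 𝓝 z, eval2 F z' (w z') = 0 :=
    mem_of_superset hz fun z' hz' => hsol z' hz'.1
  exact (neg_deriv_fst_div_deriv_snd_eq_deriv (differentiable_eval2 F _)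
    (hholo.differentiableAt hz) hsol_near hne).symm

/-- Removable-singularity derivative formula: at a point where `f`, `f_z`, `f_w`
all vanish, if `w` is a solution branch continuous at `z₀`, holomorphic off `z₀`,
and differentiable at `z₀`, then `-f_z/f_w` evaluated along the branch tends to
`w'(z₀)` as `z → z₀` (provided `f_w ≠ 0` along the branch near `z₀`). -/
theorem removable_singularity_derivative
    (F : Polynomial (Polynomial ℂ)) (z₀ w₀ : ℂ)
    (hzero : eval2 F z₀ w₀ = 0)
    (hfz : deriv (fun z => eval2 F z w₀) z₀ = 0)
    (hfw : deriv (fun v => eval2 F z₀ v) w₀ = 0)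
    (U : Set ℂ) (hU : IsOpen U) (hz₀U : z₀ ∈ U)
    (w : ℂ → ℂ) (hcont : ContinuousAt w z₀) (hw₀ : w z₀ = w₀)
    (hholo : DifferentiableOn ℂ w (U \ {z₀}))
    (hsol : ∀ z ∈ U, eval2 F z (w z) = 0)
    (hdiff : DifferentiableAt ℂ w z₀)
    (hnz : ∀ᶠ z in nhdsWithin z₀ {z₀}ᶜ, deriv (fun v => eval2 F z v) (w z) ≠ 0) :
    Filter.Tendsto
      (fun z => -(deriv (fun z' => eval2 F z' (w z)) z) /
        (deriv (fun v => eval2 F z v) (w z)))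
      (nhdsWithin z₀ {z₀}ᶜ) (nhds (deriv w z₀)) :=
  removable_singularity_derivative_general F z₀ U hU hz₀U w hcont hholo hsol hnz
end

section
/- Let σ : ℂ[w] be the polynomial f(z₀, w) of degree n with n distinct roots w_1,...,w_n (i.e. ∂f/∂w(z₀, w_i) ≠ 0 for each i). Then there exist δ > 0 and holomorphic functions φ_1,...,φ_n on B(z₀, δ) with φ_i(z₀) = w_i, f(z, φ_i(z)) = 0, and for each z ∈ B(z₀, δ), the roots of f(z, ·) are exactly {φ_1(z),...,φ_n(z)}. -/
/-!
The implicit function theorem turns each simple root `w i` of `f(z₀, ·)` into an analytic sheet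
`φ i` through it. Near `z₀` the sheets stay pairwise distinct and the leading coefficient stays
nonzero, so `f(z, ·)` has degree `n` and the `n` distinct roots `φ i z`, which are therefore all
of its roots.
-/

open Polynomial Filter Topology

theorem Polynomial.analyticAt_evalEval {𝕜 : Type*} [NontriviallyNormedField 𝕜] (F : 𝕜[X][X])
    (u : 𝕜 × 𝕜) : AnalyticAt 𝕜 (fun p : 𝕜 × 𝕜 => F.evalEval p.1 p.2) u := by
  induction F using Polynomial.induction_on with
  | C a =>
    simpa only [evalEval_C, coe_aeval_eq_eval] using
      (analyticAt_fst (𝕜 := 𝕜) (p := u)).aeval_polynomial (A := 𝕜) a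
  | add p q hp hq => simpa only [evalEval_add] using hp.fun_add hq
  | monomial n a h =>
    simpa only [pow_succ, ← mul_assoc, evalEval_mul, evalEval_X] using
      h.fun_mul analyticAt_snd

theorem ContinuousLinearMap.isInvertible_of_apply_one_ne_zero {𝕜 : Type*}
    [NontriviallyNormedField 𝕜] (f : 𝕜 →L[𝕜] 𝕜) (h : f 1 ≠ 0) : f.IsInvertible :=
  ⟨ContinuousLinearEquiv.unitsEquivAut 𝕜 (Units.mk0 _ h), by ext; simp⟩

theorem AnalyticAt.exists_implicitFunction {𝕜 E : Type*} [RCLike 𝕜] [NormedAddCommGroup E]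
    [NormedSpace 𝕜 E] [CompleteSpace E] {f : E × 𝕜 → 𝕜} {a : E} {b : 𝕜}
    (hf : AnalyticAt 𝕜 f (a, b)) (hzero : f (a, b) = 0) (hderiv : deriv (fun y => f (a, y)) b ≠ 0) :
    ∃ φ : E → 𝕜, φ a = b ∧ AnalyticAt 𝕜 φ a ∧ ∀ᶠ x in 𝓝 a, f (x, φ x) = 0 := by
  have hcd : ContDiffAt 𝕜 ⊤ f (a, b) := hf.contDiffAt
  have hpartial : HasDerivAt (fun y => f (a, y)) (fderiv 𝕜 f (a, b) (0, 1)) b :=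
    hf.differentiableAt.hasFDerivAt.comp_hasDerivAt b
      ((hasDerivAt_const b a).prodMk (hasDerivAt_id b))
  have hinv : (fderiv 𝕜 f (a, b) ∘L .inr 𝕜 E 𝕜).IsInvertible :=
    ContinuousLinearMap.isInvertible_of_apply_one_ne_zero _ (by simpa [hpartial.deriv] using hderiv)
  refine ⟨hcd.implicitFunction (by simp) hinv, hcd.implicitFunction_apply_self _ hinv,
    (hcd.contDiffAt_implicitFunction _ hinv).analyticAt, ?_⟩
  simpa [hzero] using hcd.eventually_apply_implicitFunction (by simp) hinv

theorem eventually_injective_of_continuousAt {ι X Y : Type*} [Finite ι] [TopologicalSpace X]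
    [TopologicalSpace Y] [T2Space Y] {φ : ι → X → Y} {x₀ : X} (hφ : ∀ i, ContinuousAt (φ i) x₀)
    (hinj : Function.Injective (φ · x₀)) : ∀ᶠ x in 𝓝 x₀, Function.Injective (φ · x) := by
  have hpair : ∀ i j, ∀ᶠ x in 𝓝 x₀, φ i x = φ j x → i = j := by
    intro i j
    by_cases hij : i = j
    · exact .of_forall fun _ _ => hij
    · filter_upwards [((hφ i).ne_iff_eventually_ne (hφ j)).1 (hinj.ne hij)] with x hx h
      exact absurd h hx
  filter_upwards [eventually_all.2 fun i => eventually_all.2 (hpair i)] with x hx i j using hx i j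

theorem Polynomial.isRoot_iff_exists_eq_of_injective {R ι : Type*} [CommRing R] [IsDomain R]
    [Fintype ι] {p : R[X]} (hp : p ≠ 0) (hdeg : p.natDegree ≤ Fintype.card ι) {v : ι → R}
    (hv : Function.Injective v) (hroot : ∀ i, p.IsRoot (v i)) (x : R) :
    p.IsRoot x ↔ ∃ i, x = v i := by
  have hle : Finset.univ.val.map v ≤ p.roots :=
    (Multiset.le_iff_subset (Finset.univ.nodup.map hv)).2 fun y hy => by
      obtain ⟨i, -, rfl⟩ := Multiset.mem_map.1 hy
      exact (mem_roots hp).2 (hroot i)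
  have hroots : Finset.univ.val.map v = p.roots :=
    Multiset.eq_of_le_of_card_le hle (by simpa using (card_roots' p).trans hdeg)
  rw [← mem_roots hp, ← hroots]
  simp [eq_comm]

theorem eval2_eq_evalEval (F : ℂ[X][X]) (z w : ℂ) : eval2 F z w = F.evalEval z w :=
  map_evalRingHom_eval z w F

/-- If `f(z₀,·)` has degree `n` with `n` distinct simple roots `w_1,…,w_n`, then
near `z₀` the algebraic function decomposes into `n` analytic single-valued
sheets: holomorphic functions `φ_i` with `φ_i(z₀) = w_i`, `f(z,φ_i(z)) = 0`, and
for each `z` near `z₀` the roots of `f(z,·)` are exactly the `φ_i(z)`. -/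
theorem local_sheets_at_nonsingular_point
    (F : Polynomial (Polynomial ℂ)) (z₀ : ℂ)
    (han : F.leadingCoeff.eval z₀ ≠ 0)
    (w : Fin F.natDegree → ℂ) (hinj : Function.Injective w)
    (hroot : ∀ i, eval2 F z₀ (w i) = 0)
    (hsimple : ∀ i, deriv (fun v => eval2 F z₀ v) (w i) ≠ 0) :
    ∃ δ > 0, ∃ φ : Fin F.natDegree → ℂ → ℂ,
      (∀ i, DifferentiableOn ℂ (φ i) (Metric.ball z₀ δ)) ∧
      (∀ i, φ i z₀ = w i) ∧
      (∀ i, ∀ z ∈ Metric.ball z₀ δ, eval2 F z (φ i z) = 0) ∧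
      (∀ z ∈ Metric.ball z₀ δ, ∀ y : ℂ,
        eval2 F z y = 0 ↔ ∃ i, y = φ i z) := by
  have hF : ∀ u, AnalyticAt ℂ (fun p : ℂ × ℂ => eval2 F p.1 p.2) u := by
    simpa only [eval2_eq_evalEval] using F.analyticAt_evalEval
  choose φ hφ₀ hφ hφroot using fun i =>
    (hF (z₀, w i)).exists_implicitFunction (hroot i) (hsimple i)
  have hinj₀ : Function.Injective (φ · z₀) := by simpa only [hφ₀] using hinj
  have hnear : ∀ᶠ z in 𝓝 z₀, (∀ i, AnalyticAt ℂ (φ i) z) ∧ (∀ i, eval2 F z (φ i z) = 0) ∧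
      Function.Injective (φ · z) ∧ F.leadingCoeff.eval z ≠ 0 :=
    (eventually_all.2 fun i => (hφ i).eventually_analyticAt).and <|
      (eventually_all.2 hφroot).and <|
      (eventually_injective_of_continuousAt (fun i => (hφ i).continuousAt) hinj₀).and <|
      F.leadingCoeff.continuous.continuousAt.eventually_ne han
  obtain ⟨δ, hδ, hball⟩ := Metric.eventually_nhds_iff_ball.1 hnear
  refine ⟨δ, hδ, φ, fun i z hz => ((hball z hz).1 i).differentiableAt.differentiableWithinAt,
    hφ₀, fun i z hz => (hball z hz).2.1 i, fun z hz y => ?_⟩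
  obtain ⟨-, hroots, hinjz, hlc⟩ := hball z hz
  have hlc' : evalRingHom z F.leadingCoeff ≠ 0 := hlc
  exact isRoot_iff_exists_eq_of_injective
    (leadingCoeff_ne_zero.1 (by rwa [leadingCoeff_map_of_leadingCoeff_ne_zero _ hlc']))
    (by simp [natDegree_map_of_leadingCoeff_ne_zero _ hlc']) hinjz hroots y
end

section
/- Let f(z,w) be a polynomial of w-degree n ≥ 1 with leading coefficient a_n(z), and let w : B(z₀, r) ∖ {z₀} → ℂ be holomorphic with f(z, w(z)) = 0 and a_n(z₀) ≠ 0. Then z₀ is a removable singularity of w, i.e. w is bounded near z₀ and hence, by Riemann's removable singularity theorem, extends holomorphically to B(z₀, r); in particular w cannot have an essential singularity or a pole at z₀. -/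
open Filter Topology NNReal

/-- A solution branch of `f(z,w)=0` holomorphic on a punctured disk around a
point where the leading coefficient does not vanish has a removable singularity
there: it extends holomorphically to the full disk (in particular it has neither
a pole nor an essential singularity at `z₀`). -/
theorem removable_singularity_of_branch
    (F : Polynomial (Polynomial ℂ)) (hn : 1 ≤ F.natDegree)
    (z₀ : ℂ) (r : ℝ) (hr : 0 < r)
    (w : ℂ → ℂ)
    (hw : DifferentiableOn ℂ w (Metric.ball z₀ r \ {z₀}))
    (hsol : ∀ z ∈ Metric.ball z₀ r \ {z₀}, eval2 F z (w z) = 0)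
    (han : F.leadingCoeff.eval z₀ ≠ 0) :
    ∃ W : ℂ → ℂ, DifferentiableOn ℂ W (Metric.ball z₀ r) ∧
      Set.EqOn W w (Metric.ball z₀ r \ {z₀}) := by
  set c : ℝ := ‖F.leadingCoeff.eval z₀‖ / 2 with hc
  have hc0 : 0 < c := half_pos (norm_pos_iff.2 han)
  -- a neighborhood where the leading coefficient is large
  have hcont : Continuous fun z => ‖F.leadingCoeff.eval z‖ :=
    (F.leadingCoeff.continuous).norm
  have hev : ∀ᶠ z in 𝓝 z₀, c < ‖F.leadingCoeff.eval z‖ :=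
    hcont.continuousAt.eventually (eventually_gt_nhds (half_lt_self (norm_pos_iff.2 han)))
  rcases Metric.eventually_nhds_iff.1 hev with ⟨ρ₀, hρ₀, hball⟩
  set ρ : ℝ := min (ρ₀ / 2) r with hρdef
  have hρ0 : 0 < ρ := lt_min (by positivity) hr
  have hρr : ρ ≤ r := min_le_right _ _
  have hρρ₀ : ρ < ρ₀ := lt_of_le_of_lt (min_le_left _ _) (by linarith)
  -- bound on the coefficients on the closed ball
  obtain ⟨M, hM⟩ : ∃ M, ∀ z ∈ Metric.closedBall z₀ ρ,
      ‖∑ i ∈ Finset.range F.natDegree, ‖(F.coeff i).eval z‖‖ ≤ M := by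
    apply (isCompact_closedBall z₀ ρ).exists_bound_of_continuousOn
    exact (continuous_finset_sum _ fun i _ => (F.coeff i).continuous.norm).continuousOn
  have hM0 : 0 ≤ M := by
    have := hM z₀ (Metric.mem_closedBall_self hρ0.le)
    exact le_trans (norm_nonneg _) this
  set B : ℝ := M / c + 1 with hB
  -- the root bound on the small punctured ball
  have hbound : ∀ z ∈ Metric.ball z₀ ρ \ {z₀}, ‖w z‖ ≤ B := by
    intro z hz
    have hzr : z ∈ Metric.ball z₀ r \ {z₀} :=
      ⟨Metric.ball_subset_ball hρr hz.1, hz.2⟩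
    have hlc : F.leadingCoeff.eval z ≠ 0 := by
      have := hball (lt_trans (Metric.mem_ball.1 hz.1) hρρ₀)
      intro h; rw [h] at this; simp at this; linarith
    set p : Polynomial ℂ := F.map (Polynomial.evalRingHom z) with hp
    have hlc' : (Polynomial.evalRingHom z) F.leadingCoeff ≠ 0 := hlc
    have hpne : p ≠ 0 := by
      intro h
      have : p.leadingCoeff = 0 := by rw [h]; simp
      rw [Polynomial.leadingCoeff_map_of_leadingCoeff_ne_zero _ hlc'] at this
      exact hlc' this
    have hroot : p.IsRoot (w z) := hsol z hzr
    have hlt := hroot.norm_lt_cauchyBound hpne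
    -- estimate the Cauchy bound
    have hdeg : p.natDegree = F.natDegree :=
      Polynomial.natDegree_map_of_leadingCoeff_ne_zero _ hlc'
    have hplc : p.leadingCoeff = F.leadingCoeff.eval z :=
      Polynomial.leadingCoeff_map_of_leadingCoeff_ne_zero _ hlc'
    have hzball : z ∈ Metric.closedBall z₀ ρ := Metric.ball_subset_closedBall hz.1
    have hsum := hM z hzball
    rw [Real.norm_of_nonneg (Finset.sum_nonneg fun i _ => norm_nonneg _)] at hsum
    have hsup : ((((Finset.range p.natDegree).sup fun i => ‖p.coeff i‖₊) : ℝ≥0) : ℝ) ≤ M := by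
      rcases Finset.eq_empty_or_nonempty (Finset.range p.natDegree) with h | h
      · rw [h]; simpa using hM0
      rcases Finset.exists_mem_eq_sup _ h (fun i => ‖p.coeff i‖₊) with ⟨i, hi, hieq⟩
      rw [hieq]
      have : ‖p.coeff i‖ ≤ ∑ j ∈ Finset.range F.natDegree, ‖(F.coeff j).eval z‖ := by
        rw [hp, Polynomial.coeff_map]
        exact Finset.single_le_sum (f := fun j => ‖(F.coeff j).eval z‖)
          (fun j _ => norm_nonneg _) (hdeg ▸ hi)
      exact le_trans this hsum
    have hclc : c ≤ ‖p.leadingCoeff‖ := by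
      rw [hplc]
      exact (hball (lt_trans (Metric.mem_ball.1 hz.1) hρρ₀)).le
    have hcb : (p.cauchyBound : ℝ) ≤ B := by
      rw [Polynomial.cauchyBound, hB]
      push_cast
      exact add_le_add (div_le_div₀ hM0 hsup hc0 hclc) le_rfl
    calc ‖w z‖ = (‖w z‖₊ : ℝ) := rfl
      _ ≤ (p.cauchyBound : ℝ) := by exact_mod_cast hlt.le
      _ ≤ B := hcb
  -- apply the removable singularity theorem on the small ball
  have hs : Metric.ball z₀ ρ ∈ 𝓝 z₀ := Metric.ball_mem_nhds _ hρ0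
  have hd : DifferentiableOn ℂ w (Metric.ball z₀ ρ \ {z₀}) :=
    hw.mono (Set.diff_subset_diff_left (Metric.ball_subset_ball hρr))
  have hbdd : BddAbove (norm ∘ w '' (Metric.ball z₀ ρ \ {z₀})) := by
    refine ⟨B, ?_⟩
    rintro x ⟨z, hz, rfl⟩
    exact hbound z hz
  have hW := Complex.differentiableOn_update_limUnder_of_bddAbove hs hd hbdd
  set W : ℂ → ℂ := Function.update w z₀ (limUnder (𝓝[≠] z₀) w) with hWdef
  refine ⟨W, ?_, ?_⟩
  · intro z hz
    rcases eq_or_ne z z₀ with rfl | hzne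
    · exact ((hW.differentiableAt hs).differentiableWithinAt)
    · have hopen : IsOpen (Metric.ball z₀ r \ {z₀}) :=
        Metric.isOpen_ball.sdiff isClosed_singleton
      have hwz : DifferentiableAt ℂ w z :=
        hw.differentiableAt (hopen.mem_nhds ⟨hz, hzne⟩)
      have heq : W =ᶠ[𝓝 z] w := by
        filter_upwards [isOpen_compl_singleton.mem_nhds (s := ({z₀}ᶜ : Set ℂ)) hzne]
          with x hx
        exact Function.update_of_ne hx _ _
      exact (hwz.congr_of_eventuallyEq heq).differentiableWithinAt
  · intro z hz
    exact Function.update_of_ne hz.2 _ _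
end
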